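/- arXiv:1107.5730 — 2 statements merged into one kernel-verified Lean document; each statement's English description precedes it below -/
import Mathlib

section
/- (Small-quantile asymptotics of the normalized chi-square.) Fix J ≥ 1 and let ξ_J(p) be the quantile function of (1/J)·χ²_J. Then lim_{p→0⁺} ξ_J(p)/p^{2/J} = (2/J)·Γ(J/2 + 1)^{2/J}, and consequently the diversity power P_J(β) = ∫_0^β ξ_J(p) dp satisfies lim_{β→0⁺} P_J(β)/β^{1+2/J} = (2/(J+2))·Γ(J/2 + 1)^{2/J}. In particular, ξ_J(α) = Θ(α^{−1}·P_J(α)) as α → 0⁺. -/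
open MeasureTheory ProbabilityTheory Real Filter Finset Topology
open scoped ENNReal NNReal

noncomputable section

namespace Sparsity

/-- Binary entropy function (natural logarithms). -/
def Hb (p : ℝ) : ℝ := -(p * Real.log p) - (1 - p) * Real.log (1 - p)

/-- The metric entropy rate `R(κ, α)`. -/
def Rrate (κ α : ℝ) : ℝ :=
  if α < 1 - κ then Hb κ - κ * Hb α - (1 - κ) * Hb (κ * α / (1 - κ)) else 0

/-- The standard gaussian measure on `ℝ`. -/
def stdGaussian : Measure ℝ := gaussianReal 0 1

instance : IsProbabilityMeasure stdGaussian := by unfold stdGaussian; infer_instance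

/-- i.i.d. standard gaussian measure on `ι → ℝ`. -/
def gaussianPi (ι : Type*) [Fintype ι] : Measure (ι → ℝ) := Measure.pi fun _ => stdGaussian

instance (ι : Type*) [Fintype ι] : IsProbabilityMeasure (gaussianPi ι) := by
  unfold gaussianPi; infer_instance

/-- CDF of a normalized chi-square with `J` degrees of freedom,
i.e. the law of `(1/J) ∑_{j<J} U_j^2` with `U_j` i.i.d. standard gaussian. -/
def chiCDF (J : ℕ) (t : ℝ) : ℝ :=
  ((gaussianPi (Fin J)) {u | ∑ j, (u j) ^ 2 ≤ J * t}).toReal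

/-- Quantile function `ξ_J` of the normalized chi-square with `J` degrees of freedom. -/
def xi (J : ℕ) (p : ℝ) : ℝ := sInf {t : ℝ | 0 ≤ t ∧ p ≤ chiCDF J t}

/-- The diversity power `P_J(β) = ∫_0^β ξ_J(p) dp`. -/
def Ppow (J : ℕ) (β : ℝ) : ℝ := ∫ p in (0:ℝ)..β, xi J p

/-- All sparsity patterns: size-`k` subsets of `{1,…,n}`. -/
def patterns (n k : ℕ) : Finset (Finset (Fin n)) := Finset.powersetCard k Finset.univ

/-- The underlying randomness for the joint sparsity model: nonzero values `ω.1`,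
measurement matrices `ω.2.1`, and additive noise `ω.2.2`. -/
abbrev Omega (n m J : ℕ) : Type :=
  (Fin J → Fin n → ℝ) × (Fin J → Fin m → Fin n → ℝ) × (Fin J → Fin m → ℝ)

/-- The law of the randomness: everything i.i.d. standard gaussian. -/
def omegaLaw (n m J : ℕ) : Measure (Omega n m J) :=
  (Measure.pi fun _ : Fin J => gaussianPi (Fin n)).prod
    ((Measure.pi fun _ : Fin J => Measure.pi fun _ : Fin m => gaussianPi (Fin n)).prod
      (Measure.pi fun _ : Fin J => gaussianPi (Fin m)))

/-- The sparse signal with pattern `S` and nonzero values `x`. -/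
def signal (n : ℕ) (S : Finset (Fin n)) (x : Fin n → ℝ) : Fin n → ℝ :=
  fun i => if i ∈ S then x i else 0

/-- The noisy observations `Y_j = √(SNR/k)·A_j X_j + W_j`. -/
def Yobs (n m J : ℕ) (SNR : ℝ) (k : ℕ) (S : Finset (Fin n)) (ω : Omega n m J) :
    Fin J → Fin m → ℝ :=
  fun j r =>
    Real.sqrt (SNR / k) * (∑ i, ω.2.1 j r i * signal n S (ω.1 j) i) + ω.2.2 j r

/-- Normalized distortion `d(S,T) = max(|S∖T|, |T∖S|)/k`. -/
def distor (k : ℕ) {n : ℕ} (S T : Finset (Fin n)) : ℝ :=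
  (max (S \ T).card (T \ S).card : ℝ) / k

/-- A sparsity pattern estimator: a function of the observations `(Y_j)_j`
and of the measurement matrices `(A_j)_j`. -/
abbrev Estimator (n m J : ℕ) : Type :=
  (Fin J → Fin m → ℝ) → (Fin J → Fin m → Fin n → ℝ) → Finset (Fin n)

/-- The probability that the estimator `est` makes distortion larger than `α`,
averaged over the uniformly distributed sparsity pattern. -/
def errProb (n m J k : ℕ) (SNR α : ℝ) (est : Estimator n m J) : ℝ :=
  (n.choose k : ℝ)⁻¹ * ∑ S ∈ patterns n k,
    (omegaLaw n m J
      {ω | α < distor k S (est (Yobs n m J SNR k S ω) ω.2.1)}).toReal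

/-- Distortion `α` is achievable (by some estimator sequence) at sparsity rate `κ`,
signal-to-noise ratio `SNR`, total sampling rate `ρ` and diversity `J`. -/
def achievable (κ SNR ρ : ℝ) (J : ℕ) (α : ℝ) : Prop :=
  ∃ (k m : ℕ → ℕ) (est : ∀ n, Estimator n (m n) J),
    Tendsto (fun n => (k n : ℝ) / n) atTop (𝓝 κ) ∧
    Tendsto (fun n => (J : ℝ) * (m n) / n) atTop (𝓝 ρ) ∧
    Tendsto (fun n => errProb n (m n) J (k n) SNR α (est n)) atTop (𝓝 0)

/-- The infimum total sampling rate at which distortion `α` is achievable. -/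
def rhoStar (κ SNR : ℝ) (J : ℕ) (α : ℝ) : ℝ := sInf {ρ | achievable κ SNR ρ J α}

end Sparsity

/-!
On the ball `{u | ∑ uᵢ² ≤ R}` of volume `(π R)^{J/2} / Γ(J/2 + 1)` the standard Gaussian density
on `ℝ^J` lies between `(2π)^{-J/2} e^{-R/2}` and `(2π)^{-J/2}`, so with
`L = (2/J) Γ(J/2 + 1)^{2/J}` the normalized chi-square CDF satisfies
`e^{-Jt/2} (t/L)^{J/2} ≤ F(t) ≤ (t/L)^{J/2}`. Inverting,
`L p^{2/J} ≤ ξ_J(p) ≤ L p^{2/J} e^{2 L p^{2/J}}` for small `p`, whence `ξ_J(p) / p^{2/J} → L`. A function asymptotic to `L p^a` at `0⁺` has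
`∫₀^β` asymptotic to `L β^{a+1} / (a+1)`, which gives the limit for `P_J`, and the quotient of
the two limits, `1 + 2/J`, gives the `Θ`-bound.
-/

namespace MeasureTheory

variable {E : Type*} [MeasurableSpace E]

theorem lintegral_fin_nat_prod_eq_prod {n : ℕ} {μ : Fin n → Measure E} [∀ i, SigmaFinite (μ i)]
    {f : Fin n → E → ℝ≥0∞} (hf : ∀ i, Measurable (f i)) :
    ∫⁻ x : Fin n → E, ∏ i, f i (x i) ∂(Measure.pi μ) = ∏ i, ∫⁻ x, f i x ∂(μ i) := by
  induction n with
  | zero => simp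
  | succ n ih =>
    rw [((measurePreserving_piFinSuccAbove μ 0).symm).lintegral_map_equiv]
    simp_rw [MeasurableEquiv.piFinSuccAbove_symm_apply, Fin.insertNthEquiv,
      Fin.prod_univ_succ, Fin.insertNth_zero, Equiv.coe_fn_mk, Fin.cons_succ,
      Fin.cons_zero, cast_eq, Fin.zero_succAbove]
    have hprod : Measurable fun y : Fin n → E ↦ ∏ i : Fin n, f i.succ (y i) :=
      Finset.measurable_prod _ fun i _ ↦ (hf i.succ).comp (measurable_pi_apply i)
    rw [lintegral_prod_mul (hf 0).aemeasurable hprod.aemeasurable, ih fun i ↦ hf i.succ]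

theorem lintegral_fintype_prod_eq_prod {ι : Type*} [Fintype ι] {μ : ι → Measure E}
    [∀ i, SigmaFinite (μ i)] {f : ι → E → ℝ≥0∞} (hf : ∀ i, Measurable (f i)) :
    ∫⁻ x : ι → E, ∏ i, f i (x i) ∂(Measure.pi μ) = ∏ i, ∫⁻ x, f i x ∂(μ i) := by
  let e := (Fintype.equivFin ι).symm
  rw [(measurePreserving_piCongrLeft μ e).lintegral_map_equiv]
  simp_rw [← e.prod_comp, MeasurableEquiv.coe_piCongrLeft, Equiv.piCongrLeft_apply_apply]
  exact lintegral_fin_nat_prod_eq_prod fun i ↦ hf (e i)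

theorem Measure.pi_withDensity {ι : Type*} [Fintype ι] {μ : ι → Measure E}
    [∀ i, SigmaFinite (μ i)] {f : ι → E → ℝ≥0∞} [∀ i, SigmaFinite ((μ i).withDensity (f i))]
    (hf : ∀ i, Measurable (f i)) :
    Measure.pi (fun i ↦ (μ i).withDensity (f i))
      = (Measure.pi μ).withDensity (fun x ↦ ∏ i, f i (x i)) := by
  refine (Measure.pi_eq (μ := fun i ↦ (μ i).withDensity (f i)) fun s hs ↦ ?_)
  rw [withDensity_apply _ (MeasurableSet.univ_pi hs), ← lintegral_indicator (.univ_pi hs)]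
  have hind : (Set.univ.pi s).indicator (fun x ↦ ∏ i, f i (x i))
      = fun x ↦ ∏ i, (s i).indicator (f i) (x i) := by
    ext x
    by_cases hx : x ∈ Set.univ.pi s
    · rw [Set.indicator_of_mem hx]
      exact Finset.prod_congr rfl fun i _ ↦ (Set.indicator_of_mem (hx i (Set.mem_univ i)) _).symm
    · obtain ⟨i, -, hi⟩ := not_forall₂.mp hx
      rw [Set.indicator_of_notMem hx]
      exact (Finset.prod_eq_zero (Finset.mem_univ i) (Set.indicator_of_notMem hi _)).symm
  rw [hind, lintegral_fintype_prod_eq_prod fun i ↦ (hf i).indicator (hs i)]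
  exact Finset.prod_congr rfl fun i _ ↦ by
    rw [lintegral_indicator (hs i), withDensity_apply _ (hs i)]

theorem measurableSet_setOf_sum_sq_le (ι : Type*) [Fintype ι] (R : ℝ) :
    MeasurableSet {u : ι → ℝ | ∑ i, u i ^ 2 ≤ R} :=
  measurableSet_le (by fun_prop) measurable_const

theorem volume_setOf_sum_sq_le (ι : Type*) [Fintype ι] [Nonempty ι] {R : ℝ} (hR : 0 ≤ R) :
    volume {u : ι → ℝ | ∑ i, u i ^ 2 ≤ R}
      = ENNReal.ofReal ((π * R) ^ (Fintype.card ι / 2 : ℝ) / Gamma (Fintype.card ι / 2 + 1)) := by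
  have hball : {u : ι → ℝ | ∑ i, u i ^ 2 ≤ R}
      = {u | (∑ i, |u i| ^ (2 : ℝ)) ^ (1 / (2 : ℝ)) ≤ √R} := by
    ext u
    simp only [Set.mem_ofPred_eq, Real.rpow_two, sq_abs, ← Real.sqrt_eq_rpow]
    exact (Real.sqrt_le_sqrt_iff hR).symm
  rw [hball, volume_sum_rpow_le (ι := ι) one_le_two, ← ENNReal.ofReal_pow (Real.sqrt_nonneg _),
    ← ENNReal.ofReal_mul (by positivity)]
  congr 1
  rw [Real.Gamma_add_one (by norm_num), Real.Gamma_one_half_eq,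
    show (2 : ℝ) * (1 / 2 * √π) = √π by ring, ← mul_div_assoc, ← mul_pow,
    Real.sqrt_eq_rpow, Real.sqrt_eq_rpow, ← Real.mul_rpow hR (by positivity), mul_comm R,
    ← Real.rpow_natCast, ← Real.rpow_mul (by positivity)]
  ring_nf

end MeasureTheory

theorem sqrt_two_pi_inv_pow_mul {n : ℕ} {R : ℝ} (hR : 0 ≤ R) :
    (√(2 * π))⁻¹ ^ n * ((π * R) ^ (n / 2 : ℝ) / Gamma (n / 2 + 1))
      = (R / 2) ^ (n / 2 : ℝ) / Gamma (n / 2 + 1) := by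
  have hpow : (√(2 * π))⁻¹ ^ n = (2 * π)⁻¹ ^ (n / 2 : ℝ) := by
    rw [← Real.sqrt_inv, Real.sqrt_eq_rpow, ← Real.rpow_natCast, ← Real.rpow_mul (by positivity)]
    ring_nf
  rw [hpow, mul_div_assoc', ← Real.mul_rpow (by positivity) (by positivity)]
  congr 2
  field_simp

theorem tendsto_intervalIntegral_div_rpow_add_one {f : ℝ → ℝ} {a L : ℝ} (ha : -1 < a)
    (hint : ∀ᶠ β in 𝓝[>] 0, IntervalIntegrable f volume 0 β)
    (hf : Tendsto (fun p ↦ f p / p ^ a) (𝓝[>] 0) (𝓝 L)) :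
    Tendsto (fun β ↦ (∫ p in (0 : ℝ)..β, f p) / β ^ (a + 1)) (𝓝[>] 0) (𝓝 (L / (a + 1))) := by
  have ha' : 0 < a + 1 := by linarith
  rw [Metric.tendsto_nhds]
  intro ε hε
  obtain ⟨u, hu, hclose⟩ := mem_nhdsGT_iff_exists_Ioc_subset.mp
    (Metric.tendsto_nhds.mp hf (ε * (a + 1) / 2) (by positivity))
  filter_upwards [hint, Ioo_mem_nhdsGT hu] with β hfβ ⟨hβ, hβu⟩
  have hpow : IntervalIntegrable (fun p ↦ p ^ a) volume 0 β :=
    intervalIntegral.intervalIntegrable_rpow' ha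
  have hint_pow : ∫ p in (0 : ℝ)..β, p ^ a = β ^ (a + 1) / (a + 1) := by
    rw [integral_rpow (Or.inl ha), Real.zero_rpow ha'.ne', sub_zero]
  have hβpow : 0 < β ^ (a + 1) := by positivity
  have hdev : ‖∫ p in (0 : ℝ)..β, (f p - L * p ^ a)‖
      ≤ ∫ p in (0 : ℝ)..β, ε * (a + 1) / 2 * p ^ a := by
    refine intervalIntegral.norm_integral_le_of_norm_le hβ.le (ae_of_all _ fun p hp ↦ ?_)
      (hpow.const_mul _)
    have hpa : 0 < p ^ a := Real.rpow_pos_of_pos hp.1 a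
    have hp_close := (hclose ⟨hp.1, hp.2.trans hβu.le⟩).out
    rw [Real.dist_eq] at hp_close
    rw [Real.norm_eq_abs, show f p - L * p ^ a = (f p / p ^ a - L) * p ^ a by field_simp,
      abs_mul, abs_of_pos hpa]
    exact mul_le_mul_of_nonneg_right hp_close.le hpa.le
  rw [intervalIntegral.integral_sub hfβ (hpow.const_mul L), intervalIntegral.integral_const_mul,
    intervalIntegral.integral_const_mul, hint_pow, Real.norm_eq_abs] at hdev
  rw [Real.dist_eq, show (∫ p in (0 : ℝ)..β, f p) / β ^ (a + 1) - L / (a + 1)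
      = ((∫ p in (0 : ℝ)..β, f p) - L * (β ^ (a + 1) / (a + 1))) / β ^ (a + 1) by
    field_simp, abs_div, abs_of_pos hβpow, div_lt_iff₀ hβpow]
  calc _ ≤ ε * (a + 1) / 2 * (β ^ (a + 1) / (a + 1)) := hdev
    _ < ε * β ^ (a + 1) := by field_simp; linarith [mul_pos hε hβpow]

theorem eventually_half_mul_le_and_le_two_mul {α : Type*} {l : Filter α} {f g : α → ℝ} {r : ℝ}
    (hr : 0 < r) (hg : ∀ᶠ x in l, 0 < g x) (h : Tendsto (fun x ↦ f x / g x) l (𝓝 r)) :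
    ∀ᶠ x in l, r / 2 * g x ≤ f x ∧ f x ≤ 2 * r * g x := by
  filter_upwards [hg, h.eventually (eventually_gt_nhds (half_lt_self hr)),
    h.eventually (eventually_lt_nhds (by linarith : r < 2 * r))] with x hgx hlo hhi
  exact ⟨(le_div_iff₀ hgx).mp hlo.le, (div_le_iff₀ hgx).mp hhi.le⟩

namespace Sparsity

section Gaussian

variable (ι : Type*) [Fintype ι]

theorem gaussianPi_eq_withDensity :
    gaussianPi ι = volume.withDensity fun u : ι → ℝ ↦
      ENNReal.ofReal ((√(2 * π))⁻¹ ^ Fintype.card ι * rexp (-(∑ i, u i ^ 2) / 2)) := by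
  have : SigmaFinite (volume.withDensity (gaussianPDF 0 1)) := by
    rw [← gaussianReal_of_var_ne_zero 0 one_ne_zero]; infer_instance
  rw [gaussianPi, stdGaussian, gaussianReal_of_var_ne_zero 0 one_ne_zero,
    Measure.pi_withDensity fun _ ↦ measurable_gaussianPDF 0 1, volume_pi]
  congr 1
  funext u
  simp only [gaussianPDF, gaussianPDFReal, NNReal.coe_one, mul_one, sub_zero]
  rw [← ENNReal.ofReal_prod_of_nonneg fun _ _ ↦ by positivity, Finset.prod_mul_distrib,
    Finset.prod_const, Finset.card_univ, ← Real.exp_sum, ← Finset.sum_div,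
    ← Finset.sum_neg_distrib]

theorem gaussianPi_setOf_sum_sq_le_le [Nonempty ι] {R : ℝ} (hR : 0 ≤ R) :
    (gaussianPi ι {u | ∑ i, u i ^ 2 ≤ R}).toReal
      ≤ (R / 2) ^ (Fintype.card ι / 2 : ℝ) / Gamma (Fintype.card ι / 2 + 1) := by
  refine ENNReal.toReal_le_of_le_ofReal (by positivity) ?_
  rw [gaussianPi_eq_withDensity, withDensity_apply _ (measurableSet_setOf_sum_sq_le ι R),
    ← sqrt_two_pi_inv_pow_mul hR, ENNReal.ofReal_mul (by positivity),
    ← volume_setOf_sum_sq_le ι hR, ← setLIntegral_const]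
  refine setLIntegral_mono measurable_const fun u _ ↦ ENNReal.ofReal_le_ofReal ?_
  refine mul_le_of_le_one_right (by positivity) (Real.exp_le_one_iff.mpr ?_)
  have : 0 ≤ ∑ i, u i ^ 2 := by positivity
  linarith

theorem exp_mul_le_gaussianPi_setOf_sum_sq_le [Nonempty ι] {R : ℝ} (hR : 0 ≤ R) :
    rexp (-R / 2) * ((R / 2) ^ (Fintype.card ι / 2 : ℝ) / Gamma (Fintype.card ι / 2 + 1))
      ≤ (gaussianPi ι {u | ∑ i, u i ^ 2 ≤ R}).toReal := by
  refine (ENNReal.ofReal_le_iff_le_toReal (measure_ne_top _ _)).mp ?_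
  rw [gaussianPi_eq_withDensity, withDensity_apply _ (measurableSet_setOf_sum_sq_le ι R),
    ← sqrt_two_pi_inv_pow_mul hR, ← mul_assoc, ENNReal.ofReal_mul (by positivity),
    ← volume_setOf_sum_sq_le ι hR, ← setLIntegral_const]
  refine setLIntegral_mono (by fun_prop) fun u hu ↦ ENNReal.ofReal_le_ofReal ?_
  rw [mul_comm (rexp _)]
  gcongr
  exact hu

end Gaussian

section Quantile

variable {J : ℕ}

def xiConst (J : ℕ) : ℝ := 2 / J * Gamma (J / 2 + 1) ^ ((2 : ℝ) / J)

theorem xiConst_pos (hJ : 0 < J) : 0 < xiConst J := by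
  have := Real.Gamma_pos_of_pos (by positivity : (0 : ℝ) < J / 2 + 1)
  unfold xiConst; positivity

theorem mul_div_two_rpow_div_Gamma (hJ : 0 < J) {t : ℝ} (ht : 0 ≤ t) :
    (J * t / 2) ^ (J / 2 : ℝ) / Gamma (J / 2 + 1) = (t / xiConst J) ^ (J / 2 : ℝ) := by
  have hΓ := Real.Gamma_pos_of_pos (by positivity : (0 : ℝ) < J / 2 + 1)
  have hquot : t / xiConst J = J * t / 2 / Gamma (J / 2 + 1) ^ ((2 : ℝ) / J) := by
    unfold xiConst; field_simp
  rw [hquot, Real.div_rpow (x := J * t / 2) (by positivity) (by positivity), ← Real.rpow_mul hΓ.le,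
    show (2 : ℝ) / J * (J / 2) = 1 by field_simp, Real.rpow_one]

theorem chiCDF_le (hJ : 0 < J) {t : ℝ} (ht : 0 ≤ t) :
    chiCDF J t ≤ (t / xiConst J) ^ (J / 2 : ℝ) := by
  have : Nonempty (Fin J) := ⟨⟨0, hJ⟩⟩
  have := gaussianPi_setOf_sum_sq_le_le (Fin J) (by positivity : 0 ≤ (J : ℝ) * t)
  rwa [Fintype.card_fin, mul_div_two_rpow_div_Gamma hJ ht] at this

theorem exp_mul_le_chiCDF (hJ : 0 < J) {t : ℝ} (ht : 0 ≤ t) :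
    rexp (-(J * t) / 2) * (t / xiConst J) ^ (J / 2 : ℝ) ≤ chiCDF J t := by
  have : Nonempty (Fin J) := ⟨⟨0, hJ⟩⟩
  have := exp_mul_le_gaussianPi_setOf_sum_sq_le (Fin J) (by positivity : 0 ≤ (J : ℝ) * t)
  rwa [Fintype.card_fin, mul_div_two_rpow_div_Gamma hJ ht] at this

theorem exp_le_chiCDF_xiConst (hJ : 0 < J) :
    rexp (-(J * xiConst J) / 2) ≤ chiCDF J (xiConst J) := by
  have hL := xiConst_pos hJ
  simpa [div_self hL.ne'] using exp_mul_le_chiCDF hJ hL.le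

theorem xi_le_of_le_chiCDF {p t : ℝ} (ht : 0 ≤ t) (hp : p ≤ chiCDF J t) : xi J p ≤ t :=
  csInf_le ⟨0, fun _ hs ↦ hs.1⟩ ⟨ht, hp⟩

theorem xi_le_xi {p q t : ℝ} (hpq : p ≤ q) (ht : 0 ≤ t) (hq : q ≤ chiCDF J t) :
    xi J p ≤ xi J q :=
  csInf_le_csInf ⟨0, fun _ hs ↦ hs.1⟩ ⟨t, ht, hq⟩ fun _ hs ↦ ⟨hs.1, hpq.trans hs.2⟩

theorem mul_rpow_le_xi (hJ : 0 < J) {p : ℝ} (hp : 0 < p)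
    (hp' : p ≤ rexp (-(J * xiConst J) / 2)) : xiConst J * p ^ ((2 : ℝ) / J) ≤ xi J p := by
  have hL := xiConst_pos hJ
  refine le_csInf ⟨xiConst J, hL.le, hp'.trans (exp_le_chiCDF_xiConst hJ)⟩ fun t ⟨ht, hpt⟩ ↦ ?_
  have hpt' : p ≤ (t / xiConst J) ^ (J / 2 : ℝ) := hpt.trans (chiCDF_le hJ ht)
  rw [← Real.rpow_inv_le_iff_of_pos hp.le (by positivity) (by positivity), inv_div,
    le_div_iff₀ hL] at hpt'
  linarith

theorem xi_le_mul_rpow_mul_exp (hJ : 0 < J) {p : ℝ} (hp : 0 < p)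
    (hsmall : rexp (2 * (xiConst J * p ^ ((2 : ℝ) / J))) ≤ 2) :
    xi J p ≤ xiConst J * p ^ ((2 : ℝ) / J) * rexp (2 * (xiConst J * p ^ ((2 : ℝ) / J))) := by
  have hL := xiConst_pos hJ
  set σ := xiConst J * p ^ ((2 : ℝ) / J) with hσ
  have hσ0 : 0 ≤ σ := by positivity
  have hJ' : (0 : ℝ) < J := by exact_mod_cast hJ
  refine xi_le_of_le_chiCDF (by positivity) (le_trans ?_ (exp_mul_le_chiCDF hJ (by positivity)))
  have hquot : σ * rexp (2 * σ) / xiConst J = p ^ ((2 : ℝ) / J) * rexp (2 * σ) := by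
    rw [hσ]; field_simp
  rw [hquot, Real.mul_rpow (by positivity) (by positivity), ← Real.rpow_mul hp.le,
    show (2 : ℝ) / J * (J / 2) = 1 by field_simp, Real.rpow_one, ← Real.exp_mul,
    mul_left_comm, ← Real.exp_add]
  refine le_mul_of_one_le_right hp.le (Real.one_le_exp ?_)
  have : σ * rexp (2 * σ) ≤ σ * 2 := mul_le_mul_of_nonneg_left hsmall hσ0
  nlinarith

theorem tendsto_xi_div_rpow (hJ : 0 < J) :
    Tendsto (fun p ↦ xi J p / p ^ ((2 : ℝ) / J)) (𝓝[>] 0) (𝓝 (xiConst J)) := by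
  set σ : ℝ → ℝ := fun p ↦ xiConst J * p ^ ((2 : ℝ) / J)
  have hσ : Tendsto σ (𝓝[>] 0) (𝓝 0) := by
    have := ((Real.continuousAt_rpow_const 0 ((2 : ℝ) / J) (.inr (by positivity))).tendsto
      |>.mono_left (nhdsWithin_le_nhds (s := Set.Ioi 0))).const_mul (xiConst J)
    rwa [Real.zero_rpow (by positivity), mul_zero] at this
  have hexp : Tendsto (fun p ↦ rexp (2 * σ p)) (𝓝[>] 0) (𝓝 1) := by
    simpa using (hσ.const_mul 2).rexp
  have hupper : Tendsto (fun p ↦ xiConst J * rexp (2 * σ p)) (𝓝[>] 0) (𝓝 (xiConst J)) := by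
    simpa using hexp.const_mul (xiConst J)
  refine tendsto_of_tendsto_of_tendsto_of_le_of_le' tendsto_const_nhds hupper ?_ ?_
  · filter_upwards [Ioo_mem_nhdsGT (Real.exp_pos (-(J * xiConst J) / 2))] with p ⟨hp, hp'⟩
    exact (le_div_iff₀ (by positivity)).mpr (mul_rpow_le_xi hJ hp hp'.le)
  · filter_upwards [hexp.eventually (eventually_le_nhds one_lt_two), self_mem_nhdsWithin]
      with p hsmall (hp : 0 < p)
    rw [div_le_iff₀ (by positivity), mul_right_comm]
    exact xi_le_mul_rpow_mul_exp hJ hp hsmall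

theorem intervalIntegrable_xi {β t : ℝ} (hβ : 0 ≤ β) (ht : 0 ≤ t) (hβt : β ≤ chiCDF J t) :
    IntervalIntegrable (xi J) volume 0 β := by
  refine MonotoneOn.intervalIntegrable fun p hp q hq hpq ↦ ?_
  rw [Set.uIcc_of_le hβ] at hp hq
  exact xi_le_xi hpq ht (hq.2.trans hβt)

theorem tendsto_Ppow_div_rpow (hJ : 0 < J) :
    Tendsto (fun β ↦ Ppow J β / β ^ (1 + (2 : ℝ) / J)) (𝓝[>] 0)
      (𝓝 (xiConst J / (1 + 2 / J))) := by
  have hL := xiConst_pos hJ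
  have hint : ∀ᶠ β in 𝓝[>] 0, IntervalIntegrable (xi J) volume 0 β := by
    filter_upwards [Ioo_mem_nhdsGT (Real.exp_pos (-(J * xiConst J) / 2))] with β ⟨hβ, hβ'⟩
    exact intervalIntegrable_xi hβ.le hL.le (hβ'.le.trans (exp_le_chiCDF_xiConst hJ))
  have ha : (-1 : ℝ) < 2 / J := by linarith [show (0 : ℝ) ≤ 2 / J by positivity]
  simpa only [Ppow, add_comm (1 : ℝ)] using
    tendsto_intervalIntegral_div_rpow_add_one ha hint (tendsto_xi_div_rpow hJ)

end Quantile

/-- **Small-quantile asymptotics of the normalized chi-square.**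
`ξ_J(p) ~ (2/J)·Γ(J/2+1)^{2/J}·p^{2/J}` as `p → 0⁺`, hence
`P_J(β) ~ (2/(J+2))·Γ(J/2+1)^{2/J}·β^{1+2/J}`, and `ξ_J(α) = Θ(α⁻¹ P_J(α))`. -/
theorem xi_small_quantile_asymptotics (J : ℕ) (hJ : 1 ≤ J) :
    Tendsto (fun p : ℝ => xi J p / p ^ ((2:ℝ) / J)) (𝓝[>] 0)
      (𝓝 ((2 / J) * Real.Gamma ((J : ℝ) / 2 + 1) ^ ((2:ℝ) / J))) ∧
    Tendsto (fun β : ℝ => Ppow J β / β ^ (1 + (2:ℝ) / J)) (𝓝[>] 0)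
      (𝓝 ((2 / ((J : ℝ) + 2)) * Real.Gamma ((J : ℝ) / 2 + 1) ^ ((2:ℝ) / J))) ∧
    ∃ c C : ℝ, 0 < c ∧ c ≤ C ∧ ∀ᶠ α in 𝓝[>] (0:ℝ),
      c * (Ppow J α / α) ≤ xi J α ∧ xi J α ≤ C * (Ppow J α / α) := by
  have hxi := tendsto_xi_div_rpow hJ
  have hP := tendsto_Ppow_div_rpow hJ
  have hr : (0 : ℝ) < 1 + 2 / J := by positivity
  have hM : 0 < xiConst J / (1 + 2 / J) := div_pos (xiConst_pos hJ) hr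
  refine ⟨hxi, ?_, ⟨(1 + 2 / J) / 2, 2 * (1 + 2 / J), by positivity, by linarith, ?_⟩⟩
  · convert hP using 2
    unfold xiConst
    field_simp
  have hratio := hxi.div hP hM.ne'
  rw [div_div_cancel₀ (xiConst_pos hJ).ne'] at hratio
  refine eventually_half_mul_le_and_le_two_mul hr ?_ (hratio.congr' ?_)
  · filter_upwards [hP.eventually (eventually_gt_nhds hM), self_mem_nhdsWithin]
      with α hPα (hα : 0 < α)
    exact div_pos ((div_pos_iff_of_pos_right (by positivity)).mp hPα) hα
  · filter_upwards [self_mem_nhdsWithin] with α (hα : 0 < α)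
    rw [Pi.div_apply, Real.rpow_add hα, Real.rpow_one]
    field_simp

end Sparsity
end
end

section
/- (Small-distortion behavior of the entropy rate.) Fix κ ∈ (0,1/2) and let R(κ,α) = H_b(κ) − κ·H_b(α) − (1−κ)·H_b(κα/(1−κ)). Then lim_{α→0⁺} (H_b(κ) − R(κ,α)) / (α·log(1/α)) = 2κ. -/
open MeasureTheory ProbabilityTheory Real Filter Finset Topology
open scoped ENNReal NNReal

noncomputable section

/-!
Below the threshold `α < 1 - κ` one has
`H_b(κ) - R(κ,α) = κ H_b(α) + (1-κ) H_b(cα)` with `c = κ/(1-κ)`.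
As `x → 0⁺`, `H_b(x) = x log(1/x) + O(x)`, and `log(1/(cx)) ~ log(1/x)`, so `H_b(cα)` contributes
`c · α log(1/α)` to leading order; the limit is `κ + (1-κ)c = 2κ`.
-/

namespace Sparsity

lemma tendsto_negMulLog_one_sub_div :
    Tendsto (fun x => negMulLog (1 - x) / x) (𝓝[>] 0) (𝓝 1) := by
  have hderiv : HasDerivAt (fun x => negMulLog (1 - x)) 1 0 := by
    have hf : HasDerivAt negMulLog (-1) (1 - 0) := by
      simpa using hasDerivAt_negMulLog one_ne_zero
    simpa using hf.comp_const_sub 1 0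
  simpa [div_eq_inv_mul] using hderiv.tendsto_slope_zero_right

lemma tendsto_log_one_div_nhdsGT_zero : Tendsto (fun x => log (1 / x)) (𝓝[>] 0) atTop := by
  simpa [Function.comp_def] using tendsto_neg_atBot_atTop.comp tendsto_log_nhdsGT_zero

lemma tendsto_Hb_div_mul_log_one_div :
    Tendsto (fun x => Hb x / (x * log (1 / x))) (𝓝[>] 0) (𝓝 1) := by
  have hlim := tendsto_const_nhds (x := (1 : ℝ)).add
    (tendsto_negMulLog_one_sub_div.mul tendsto_log_one_div_nhdsGT_zero.inv_tendsto_atTop)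
  rw [mul_zero, add_zero] at hlim
  refine hlim.congr' ?_
  filter_upwards [Ioo_mem_nhdsGT one_pos] with x ⟨hx0, hx1⟩
  have hlog : log x ≠ 0 := (log_neg hx0 hx1).ne
  simp only [Hb, negMulLog, Pi.inv_apply, one_div, log_inv]
  field_simp
  ring

lemma tendsto_log_one_div_const_mul_div {c : ℝ} (hc : 0 < c) :
    Tendsto (fun x => log (1 / (c * x)) / log (1 / x)) (𝓝[>] 0) (𝓝 1) := by
  have hlim := tendsto_const_nhds (x := (1 : ℝ)).add
    (tendsto_const_nhds (x := log (1 / c)).mul tendsto_log_one_div_nhdsGT_zero.inv_tendsto_atTop)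
  rw [mul_zero, add_zero] at hlim
  refine hlim.congr' ?_
  filter_upwards [Ioo_mem_nhdsGT one_pos] with x ⟨hx0, hx1⟩
  have hlog : log (1 / x) ≠ 0 := (log_pos (one_lt_one_div hx0 hx1)).ne'
  rw [Pi.inv_apply, ← one_div_mul_one_div, log_mul (by positivity) (by positivity)]
  field_simp
  ring

lemma tendsto_Hb_const_mul_div_mul_log_one_div {c : ℝ} (hc : 0 < c) :
    Tendsto (fun x => Hb (c * x) / (x * log (1 / x))) (𝓝[>] 0) (𝓝 c) := by
  have hcx : Tendsto (fun x => c * x) (𝓝[>] 0) (𝓝[>] 0) :=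
    tendsto_nhdsWithin_iff.2
      ⟨by simpa using ((tendsto_id (x := 𝓝 (0 : ℝ))).const_mul c).mono_left nhdsWithin_le_nhds,
        eventually_nhdsWithin_of_forall fun x hx => mul_pos hc hx⟩
  have hlim := (tendsto_const_nhds (x := c)).mul
    ((tendsto_Hb_div_mul_log_one_div.comp hcx).mul (tendsto_log_one_div_const_mul_div hc))
  rw [mul_one, mul_one] at hlim
  refine hlim.congr' ?_
  filter_upwards [Ioo_mem_nhdsGT (inv_pos.2 hc)] with x ⟨hx0, hx1⟩
  have hcx1 : c * x < 1 := (mul_lt_mul_of_pos_left hx1 hc).trans_eq (mul_inv_cancel₀ hc.ne')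
  have hlog : log (1 / (c * x)) ≠ 0 := (log_pos (one_lt_one_div (by positivity) hcx1)).ne'
  simp only [Function.comp_apply]
  field_simp

lemma Hb_sub_Rrate {κ α : ℝ} (hα : α < 1 - κ) :
    Hb κ - Rrate κ α = κ * Hb α + (1 - κ) * Hb (κ / (1 - κ) * α) := by
  rw [Rrate, if_pos hα, div_mul_eq_mul_div]
  ring

/-- **Small-distortion behavior of the entropy rate.**
`(H_b(κ) − R(κ,α)) / (α log(1/α)) → 2κ` as `α → 0⁺`. -/
theorem entropy_rate_small_distortion (κ : ℝ) (hκ : κ ∈ Set.Ioo 0 (1/2)) :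
    Tendsto (fun α : ℝ => (Hb κ - Rrate κ α) / (α * Real.log (1 / α)))
      (𝓝[>] 0) (𝓝 (2 * κ)) := by
  obtain ⟨hκ0, hκ2⟩ := hκ
  have hκ1 : 0 < 1 - κ := by linarith
  have hlim := ((tendsto_Hb_const_mul_div_mul_log_one_div one_pos).const_mul κ).add
    ((tendsto_Hb_const_mul_div_mul_log_one_div (div_pos hκ0 hκ1)).const_mul (1 - κ))
  rw [mul_one, mul_div_cancel₀ _ hκ1.ne', ← two_mul] at hlim
  refine hlim.congr' ?_
  filter_upwards [Ioo_mem_nhdsGT hκ1] with α ⟨_, hα1⟩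
  rw [Hb_sub_Rrate hα1, one_mul, add_div, mul_div_assoc, mul_div_assoc]

end Sparsity
end
end
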